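/- For all r, s ∈ ℤ and all indices 1 ≤ i, j, k, l ≤ n, the trace cocycle evaluated on the current-algebra generators satisfies c_Lie(E_{ij}^r, E_{kl}^s) = δ_{r,−s}·δ_{il}·δ_{jk}·s, where E_{ij}^r is the endomorphism of V whose m-th component of E_{ij}^r(v) is δ_{mi}·z^r·v_j. -/

import Mathlib

noncomputable section

abbrev K : Type := LaurentSeries ℂ

abbrev V (n : ℕ) : Type := Fin n → K

/-- The formal derivative of a Laurent series. -/
def fd (f : K) : K :=
  ⟨fun k => ((k + 1 : ℤ) : ℂ) * f.coeff (k + 1), by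
    apply Set.IsPWO.mono (f.isPWO_support.image_of_monotone
      (f := fun x => x - 1) (fun _ _ h => sub_le_sub_right h 1))
    intro k hk
    have : f.coeff (k + 1) ≠ 0 := by
      intro h
      simp [Function.mem_support, h] at hk
    exact ⟨k + 1, this, by ring⟩⟩

/-- Truncation of a Laurent series to its coefficients in negative degrees: the
projection onto `K₋` along `K₊`. -/
def tneg (f : K) : K :=
  ⟨fun k => if k < 0 then f.coeff k else 0, by
    refine f.isPWO_support.mono (fun k hk => ?_)
    simp only [Function.mem_support] at hk ⊢
    by_cases h : k < 0
    · simpa [h] using hk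
    · simp [h] at hk⟩

/-- Truncation of a Laurent series to its coefficients in non-negative degrees: the
projection onto `K₊` along `K₋`. -/
def tpos (f : K) : K :=
  ⟨fun k => if 0 ≤ k then f.coeff k else 0, by
    refine f.isPWO_support.mono (fun k hk => ?_)
    simp only [Function.mem_support] at hk ⊢
    by_cases h : (0:ℤ) ≤ k
    · simpa [h] using hk
    · simp [h] at hk⟩

/-- Componentwise projection of `V` onto `V₋` along `V₊`. -/
def projM {n : ℕ} (v : V n) : V n := fun i => tneg (v i)

/-- Componentwise projection of `V` onto `V₊` along `V₋`. -/
def projP {n : ℕ} (v : V n) : V n := fun i => tpos (v i)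

/-- The basis vector `z^m · e_i` of `V`. -/
def bas (n : ℕ) (m : ℤ) (i : Fin n) : V n :=
  fun j => if j = i then HahnSeries.single m 1 else 0

/-- `T₁^{+−} ∘ T₂^{−+} − T₂^{+−} ∘ T₁^{−+}` as a map `V₋ → V₋` (evaluated through the
projections onto `V₋` and `V₊`). -/
def commPM {n : ℕ} (T₁ T₂ : V n → V n) (v : V n) : V n :=
  projM (T₁ (projP (T₂ (projM v)))) - projM (T₂ (projP (T₁ (projM v))))

/-- The trace cocycle `c_Lie(T₁, T₂) = Tr(T₁^{+−} T₂^{−+} − T₂^{+−} T₁^{−+})`, computed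
as the (finitely supported) sum of the diagonal coefficients in the basis
`{z^m e_i : m < 0, i}` of `V₋`. -/
def cLie (n : ℕ) (T₁ T₂ : V n → V n) : ℂ :=
  ∑ᶠ (m : ℤ) (_ : m < 0) (i : Fin n), ((commPM T₁ T₂ (bas n m i)) i).coeff m

/-- The current-algebra generator `E_{ij}^r`, whose `m`-th component of `E_{ij}^r v` is
`δ_{mi} · z^r · v_j`. -/
def Eb (n : ℕ) (i j : Fin n) (r : ℤ) : V n → V n :=
  fun v m => if m = i then HahnSeries.single r 1 * v j else 0

/-! For `m < 0`, `E_{kl}^s` moves `z^m e_p` to `z^{m+s} e_k` (if `p = l`), which lies in `V₊` iff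
`m ≥ -s`; `E_{ij}^r` then returns a multiple of `z^m e_p` only if `r = -s`, `j = k`, `i = l`. Hence
`Tr(E_{ij}^{r,+−} E_{kl}^{s,−+})` counts the `m ∈ [-s, 0)`, the other product counts the
`m ∈ [s, 0)`, and the difference of the two counts is `s`. -/

lemma projM_zero (n : ℕ) : projM (0 : V n) = 0 := by
  funext q; ext k; simp [projM, tneg]

lemma projP_zero (n : ℕ) : projP (0 : V n) = 0 := by
  funext q; ext k; simp [projP, tpos]

lemma Eb_zero (n : ℕ) (i j : Fin n) (r : ℤ) : Eb n i j r 0 = 0 := by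
  funext q; simp [Eb]

lemma bas_coeff (n : ℕ) (m m' : ℤ) (i p : Fin n) :
    (bas n m' i p).coeff m = if p = i ∧ m = m' then 1 else 0 := by
  by_cases hp : p = i <;> simp [bas, hp, HahnSeries.coeff_single]

lemma projM_bas (n : ℕ) (m : ℤ) (p : Fin n) :
    projM (bas n m p) = if m < 0 then bas n m p else 0 := by
  funext q; ext k
  by_cases hm : m < 0 <;> by_cases hk : k = m <;>
    simp [projM, tneg, bas, hm, hk, apply_ite (fun f : K => f.coeff k)]

lemma projP_bas (n : ℕ) (m : ℤ) (p : Fin n) :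
    projP (bas n m p) = if 0 ≤ m then bas n m p else 0 := by
  funext q; ext k
  by_cases hm : 0 ≤ m <;> by_cases hk : k = m <;>
    simp [projP, tpos, bas, hm, hk, apply_ite (fun f : K => f.coeff k)]

lemma Eb_bas (n : ℕ) (i j : Fin n) (r m : ℤ) (p : Fin n) :
    Eb n i j r (bas n m p) = if j = p then bas n (r + m) i else 0 := by
  funext q
  by_cases hj : j = p <;> by_cases hq : q = i <;>
    simp [Eb, bas, hj, hq, HahnSeries.single_mul_single]

/-- The contribution of degree `m` to `Tr(T₁^{+−} T₂^{−+})`. -/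
def diagTrace (n : ℕ) (T₁ T₂ : V n → V n) (m : ℤ) : ℂ :=
  ∑ p, (projM (T₁ (projP (T₂ (projM (bas n m p))))) p).coeff m

lemma cLie_eq_finsum_diagTrace_sub (n : ℕ) (T₁ T₂ : V n → V n) :
    cLie n T₁ T₂ = ∑ᶠ (m : ℤ) (_ : m < 0), (diagTrace n T₁ T₂ m - diagTrace n T₂ T₁ m) := by
  simp only [cLie, commPM, diagTrace, Pi.sub_apply, HahnSeries.coeff_sub,
    finsum_eq_sum_of_fintype, Finset.sum_sub_distrib]

lemma diagTrace_Eb (n : ℕ) (i j k l : Fin n) (r s : ℤ) {m : ℤ} (hm : m < 0) :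
    diagTrace n (Eb n i j r) (Eb n k l s) m =
      if i = l ∧ j = k ∧ r = -s ∧ -s ≤ m then 1 else 0 := by
  simp only [diagTrace, projM_bas, if_pos hm, Eb_bas, projP_bas, apply_ite projP,
    apply_ite (Eb n i j r), apply_ite projM, projP_zero, projM_zero, Eb_zero]
  rw [Fintype.sum_eq_single l fun p hp => by simp [Ne.symm hp], if_pos rfl]
  split_ifs <;> simp_all [bas_coeff] <;> omega

lemma diagTrace_Eb_sub_diagTrace_Eb (n : ℕ) (i j k l : Fin n) (r s : ℤ) {m : ℤ} (hm : m < 0) :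
    diagTrace n (Eb n i j r) (Eb n k l s) m - diagTrace n (Eb n k l s) (Eb n i j r) m =
      if r = -s ∧ i = l ∧ j = k then
        (if -s ≤ m then (1 : ℂ) else 0) - if s ≤ m then 1 else 0
      else 0 := by
  rw [diagTrace_Eb n i j k l r s hm, diagTrace_Eb n k l i j s r hm]
  by_cases h : r = -s ∧ i = l ∧ j = k
  · obtain ⟨rfl, rfl, rfl⟩ := h
    simp
  · rw [if_neg h, if_neg fun ⟨hil, hjk, hrs, _⟩ => h ⟨hrs, hil, hjk⟩,
      if_neg fun ⟨hkj, hli, hsr, _⟩ => h ⟨by omega, hli.symm, hkj.symm⟩, sub_zero]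

lemma finsum_neg_ite_le_sub_ite_le (s : ℤ) :
    ∑ᶠ (m : ℤ) (_ : m < 0), ((if -s ≤ m then (1 : ℂ) else 0) - if s ≤ m then 1 else 0) = s := by
  have hs := abs_le.mp (le_refl |s|)
  rw [finsum_cond_eq_sum_of_cond_iff _ (t := Finset.Ico (-|s|) 0) fun {m} hm => ?_]
  · rw [Finset.sum_sub_distrib, Finset.sum_boole, Finset.sum_boole, Finset.Ico_filter_le,
      Finset.Ico_filter_le, max_eq_right (by omega), max_eq_right (by omega),
      Int.card_Ico, Int.card_Ico]
    exact_mod_cast (by omega : ((0 - -s).toNat : ℤ) - (0 - s).toNat = s)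
  · rw [Finset.mem_Ico]
    refine ⟨fun hneg => ⟨?_, hneg⟩, And.right⟩
    by_contra
    exact hm (by simp [show ¬ -s ≤ m by omega, show ¬ s ≤ m by omega])

theorem cLie_current_general (n : ℕ) (r s : ℤ) (i j k l : Fin n) :
    cLie n (Eb n i j r) (Eb n k l s) =
      if r = -s ∧ i = l ∧ j = k then (s : ℂ) else 0 := by
  rw [cLie_eq_finsum_diagTrace_sub,
    finsum_congr fun m => finsum_congr (diagTrace_Eb_sub_diagTrace_Eb n i j k l r s)]
  split_ifs
  · exact finsum_neg_ite_le_sub_ite_le s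
  · simp

/-- The value of the trace cocycle on the current-algebra generators:
`c_Lie(E_{ij}^r, E_{kl}^s) = δ_{r,−s} · δ_{il} · δ_{jk} · s`. -/
theorem cLie_current (n : ℕ) (hn : 1 ≤ n) (r s : ℤ) (i j k l : Fin n) :
    cLie n (Eb n i j r) (Eb n k l s) =
      if r = -s ∧ i = l ∧ j = k then (s : ℂ) else 0 :=
  cLie_current_general n r s i j k l

end
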